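/- arXiv:1610.03972 — 2 statements merged into one kernel-verified Lean document; each statement's English description precedes it below -/
import Mathlib

section
/- If G is a connected graph in class W_2 with G ≠ K_2, then |A| ≤ α(G[N(A)]) for every independent set A, i.e., the subgraph induced on the neighborhood of A contains an independent set of size at least |A|. -/
open Finset

/-- A finset of vertices is independent: no two of its members are adjacent. -/
def IndepSet {V : Type*} (G : SimpleGraph V) (A : Finset V) : Prop :=
  ∀ u ∈ A, ∀ v ∈ A, ¬ G.Adj u v

open scoped Classical in
/-- Maximum size of an independent set contained in `s` (independence number of `G[s]`). -/
noncomputable def alphaOn {V : Type*} [Fintype V] (G : SimpleGraph V) (s : Finset V) : ℕ :=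
  ((s.powerset).filter (fun A => IndepSet G A)).sup Finset.card

/-- The independence number of `G`. -/
noncomputable def alpha {V : Type*} [Fintype V] (G : SimpleGraph V) : ℕ :=
  alphaOn G Finset.univ

/-- The induced subgraph `G[s]` is well-covered: every maximal independent subset of `s`
has maximum cardinality. -/
def WellCoveredOn {V : Type*} [Fintype V] (G : SimpleGraph V) (s : Finset V) : Prop :=
  ∀ A ⊆ s, IndepSet G A →
    (∀ B ⊆ s, IndepSet G B → A ⊆ B → A = B) → A.card = alphaOn G s

/-- `G` is well-covered. -/
def WellCovered {V : Type*} [Fintype V] (G : SimpleGraph V) : Prop :=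
  WellCoveredOn G Finset.univ

open scoped Classical in
/-- The open neighborhood `N(A)`: vertices having a neighbor in `A`. -/
noncomputable def nbhd {V : Type*} [Fintype V] (G : SimpleGraph V) (A : Finset V) : Finset V :=
  Finset.univ.filter (fun v => ∃ u ∈ A, G.Adj u v)

/-- The closed neighborhood `N[A] = A ∪ N(A)`. -/
noncomputable def closedNbhd {V : Type*} [Fintype V] [DecidableEq V] (G : SimpleGraph V) (A : Finset V) :
    Finset V :=
  A ∪ nbhd G A

/-- The induced subgraph `G[s]` is in class `W₂`: every two disjoint independent subsets of `s`
extend to two disjoint maximum independent subsets of `s`. -/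
def W2On {V : Type*} [Fintype V] (G : SimpleGraph V) (s : Finset V) : Prop :=
  ∀ A ⊆ s, ∀ B ⊆ s, IndepSet G A → IndepSet G B → Disjoint A B →
    ∃ S₁ ⊆ s, ∃ S₂ ⊆ s, IndepSet G S₁ ∧ IndepSet G S₂ ∧
      S₁.card = alphaOn G s ∧ S₂.card = alphaOn G s ∧ Disjoint S₁ S₂ ∧ A ⊆ S₁ ∧ B ⊆ S₂

/-- `G` belongs to class `W₂`. -/
def W2 {V : Type*} [Fintype V] (G : SimpleGraph V) : Prop :=
  W2On G Finset.univ

/-! A maximum independent set `S` disjoint from the independent set `A` can trade its part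
inside `N(A)` for `A`: the set `(S \ N(A)) ∪ A` is still independent, so by maximality
`|A| ≤ |S ∩ N(A)| ≤ α(G[N(A)])`. In a `W₂` graph the pair `A, ∅` extends to disjoint maximum
independent sets, which provides such an `S`. -/

section IndepSet

variable {V : Type*} {G : SimpleGraph V}

theorem IndepSet.mono {A B : Finset V} (hB : IndepSet G B) (hAB : A ⊆ B) : IndepSet G A :=
  fun u hu v hv => hB u (hAB hu) v (hAB hv)

theorem IndepSet.card_le_alphaOn [Fintype V] {A s : Finset V} (hA : IndepSet G A) (hAs : A ⊆ s) :
    A.card ≤ alphaOn G s := by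
  classical
  unfold alphaOn
  convert Finset.le_sup (f := Finset.card) (Finset.mem_filter.2 ⟨Finset.mem_powerset.2 hAs, hA⟩)

theorem IndepSet.sdiff_nbhd_union [Fintype V] [DecidableEq V] {S A : Finset V}
    (hS : IndepSet G S) (hA : IndepSet G A) : IndepSet G (S \ nbhd G A ∪ A) := by
  have not_adj : ∀ u ∈ S \ nbhd G A, ∀ v ∈ A, ¬ G.Adj u v := fun u hu v hv huv =>
    (Finset.mem_sdiff.1 hu).2 (by simpa [nbhd] using ⟨v, hv, huv.symm⟩)
  intro u hu v hv
  rcases Finset.mem_union.1 hu with hu | hu <;> rcases Finset.mem_union.1 hv with hv | hv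
  · exact hS u (Finset.mem_sdiff.1 hu).1 v (Finset.mem_sdiff.1 hv).1
  · exact not_adj u hu v hv
  · exact fun huv => not_adj v hv u hu huv.symm
  · exact hA u hu v hv

theorem IndepSet.card_le_card_inter_nbhd [Fintype V] [DecidableEq V] {S A : Finset V}
    (hS : IndepSet G S) (hSmax : alpha G ≤ S.card) (hA : IndepSet G A) (hAS : Disjoint A S) :
    A.card ≤ (S ∩ nbhd G A).card := by
  have hswap : (S \ nbhd G A ∪ A).card ≤ alpha G :=
    (hS.sdiff_nbhd_union hA).card_le_alphaOn (Finset.subset_univ _)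
  have hcard : (S \ nbhd G A ∪ A).card = (S \ nbhd G A).card + A.card :=
    Finset.card_union_of_disjoint (hAS.symm.mono_left Finset.sdiff_subset)
  have hsplit : (S \ nbhd G A).card + (S ∩ nbhd G A).card = S.card :=
    Finset.card_sdiff_add_card_inter S (nbhd G A)
  omega

end IndepSet

theorem W2.exists_maximum_indepSet_disjoint {V : Type*} [Fintype V] {G : SimpleGraph V}
    (hG : W2 G) {A : Finset V} (hA : IndepSet G A) :
    ∃ S, IndepSet G S ∧ S.card = alpha G ∧ Disjoint A S := by
  obtain ⟨S₁, -, S₂, -, -, hS₂, -, hS₂card, hdisj, hAS₁, -⟩ :=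
    hG A (Finset.subset_univ A) ∅ (Finset.subset_univ ∅) hA (by simp [IndepSet])
      (Finset.disjoint_empty_right A)
  exact ⟨S₂, hS₂, hS₂card, hdisj.mono_left hAS₁⟩

theorem stmt11_general {V : Type*} [Fintype V] (G : SimpleGraph V)
    (h : W2 G) :
    ∀ A : Finset V, IndepSet G A → A.card ≤ alphaOn G (nbhd G A) := by
  classical
  intro A hA
  obtain ⟨S, hS, hScard, hAS⟩ := h.exists_maximum_indepSet_disjoint hA
  calc A.card ≤ (S ∩ nbhd G A).card := hS.card_le_card_inter_nbhd hScard.ge hA hAS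
    _ ≤ alphaOn G (nbhd G A) :=
      (hS.mono Finset.inter_subset_left).card_le_alphaOn Finset.inter_subset_right

/-- In a connected W₂ graph other than K₂, |A| ≤ α(G[N(A)]) for every independent set A. -/
theorem stmt11 {V : Type*} [Fintype V] (G : SimpleGraph V)
    (hconn : G.Connected) (hK2 : ¬ Nonempty (G ≃g (⊤ : SimpleGraph (Fin 2))))
    (h : W2 G) :
    ∀ A : Finset V, IndepSet G A → A.card ≤ alphaOn G (nbhd G A) :=
  stmt11_general G h
end

section
/- K_2 is the unique connected graph in class W_2 whose number of vertices equals twice its independence number. -/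
open Finset

/-!
Two disjoint maximum independent sets of a `W₂` graph with `|V| = 2α` partition `V`.
A vertex `v` is not isolated, since `W₂` gives a maximum independent set avoiding `v`, to which
`v` could otherwise be added. Extending `{v}` and `S \ {v}`, for a maximum independent set
`S ∋ v`, to a partition `T₁ ⊔ T₂`, every neighbour of `v` lies in `T₂ \ (S \ {v})`, a single
vertex. So every vertex has exactly one neighbour, and a connected such graph is `K₂`.
-/

namespace SimpleGraph

variable {V : Type*}

theorem nonempty_iso_top_fin_two_of_existsUnique_adj {G : SimpleGraph V} (hconn : G.Connected)
    (hG : ∀ v, ∃! w, G.Adj v w) : Nonempty (G ≃g (⊤ : SimpleGraph (Fin 2))) := by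
  obtain ⟨v₀⟩ := hconn.nonempty
  obtain ⟨w₀, hvw, hv_unique⟩ := hG v₀
  have hw_unique : ∀ y, G.Adj w₀ y → y = v₀ := fun y hy =>
    (hG w₀).unique hy hvw.symm
  have hclosed : ∀ x y, G.Adj x y → x ∈ ({v₀, w₀} : Set V) → y ∈ ({v₀, w₀} : Set V) := by
    rintro x y hxy (rfl | rfl)
    · exact Or.inr (hv_unique y hxy)
    · exact Or.inl (hw_unique y hxy)
  have hall : ∀ x, x ∈ ({v₀, w₀} : Set V) := by
    intro x
    induction (reachable_iff_reflTransGen v₀ x).1 (hconn v₀ x) with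
    | refl => exact Or.inl rfl
    | tail _ hadj ih => exact hclosed _ _ hadj ih
  have htop : G = ⊤ := by
    ext x y
    refine ⟨G.ne_of_adj, fun hxy => ?_⟩
    rcases hall x with rfl | rfl <;> rcases hall y with rfl | rfl
    exacts [absurd rfl hxy, hvw, hvw.symm, absurd rfl hxy]
  have hcard : Nat.card V = 2 :=
    Nat.card_eq_two_iff.2 ⟨v₀, w₀, G.ne_of_adj hvw, Set.eq_univ_of_forall hall⟩
  have : Finite V := Nat.finite_of_card_ne_zero (by omega)
  subst htop
  exact ⟨Iso.completeGraph (Finite.equivFinOfCardEq hcard)⟩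

end SimpleGraph

section IndepSet

variable {V : Type*} {G : SimpleGraph V}

theorem indepSet_empty : IndepSet G ∅ := by
  simp [IndepSet]

theorem indepSet_singleton (v : V) : IndepSet G {v} := by
  simp [IndepSet]

theorem IndepSet.insert [DecidableEq V] {A : Finset V} {v : V} (hA : IndepSet G A)
    (hv : ∀ u ∈ A, ¬ G.Adj v u) : IndepSet G (insert v A) := by
  intro a ha b hb hab
  rw [Finset.mem_insert] at ha hb
  rcases ha with rfl | ha <;> rcases hb with rfl | hb
  exacts [G.loopless.irrefl _ hab, hv b hb hab, hv a ha hab.symm, hA a ha b hb hab]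

theorem IndepSet.card_le_alpha [Fintype V] {A : Finset V} (hA : IndepSet G A) :
    A.card ≤ alpha G := by
  classical
  exact Finset.le_sup (f := Finset.card)
    (Finset.mem_filter.2 ⟨Finset.mem_powerset.2 A.subset_univ, hA⟩)

end IndepSet

namespace W2

variable {V : Type*} [Fintype V] {G : SimpleGraph V}

theorem exists_adj (h : W2 G) (v : V) : ∃ w, G.Adj v w := by
  classical
  obtain ⟨S, -, T, -, hS, -, hSα, -, hST, -, hvT⟩ :=
    h ∅ (empty_subset _) {v} (subset_univ _) indepSet_empty (indepSet_singleton v)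
      (disjoint_empty_left _)
  have hvS : v ∉ S := disjoint_right.1 hST (singleton_subset_iff.1 hvT)
  by_contra! hisolated
  have hle := (hS.insert fun u _ => hisolated u).card_le_alpha
  rw [card_insert_of_notMem hvS, alpha, ← hSα] at hle
  omega

theorem adj_unique (h : W2 G) (hcard : Fintype.card V = 2 * alpha G) {v x y : V}
    (hx : G.Adj v x) (hy : G.Adj v y) : x = y := by
  classical
  obtain ⟨S, -, -, -, hS, -, hSα, -, -, hvS, -⟩ :=
    h {v} (subset_univ _) ∅ (empty_subset _) (indepSet_singleton v) indepSet_empty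
      (disjoint_empty_right _)
  replace hvS : v ∈ S := singleton_subset_iff.1 hvS
  obtain ⟨T₁, -, T₂, -, hT₁, -, hT₁α, hT₂α, hT, hvT₁, hST₂⟩ :=
    h {v} (subset_univ _) (S.erase v) (subset_univ _) (indepSet_singleton v)
      (hS.mono (erase_subset v S)) (by simp)
  replace hvT₁ : v ∈ T₁ := singleton_subset_iff.1 hvT₁
  have hcover : T₁ ∪ T₂ = univ := by
    apply eq_univ_of_card
    rw [card_union_of_disjoint hT, hT₁α, hT₂α, hcard, alpha]
    ring
  have hrest : (T₂ \ S.erase v).card ≤ 1 := by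
    rw [card_sdiff_of_subset hST₂, card_erase_of_mem hvS, hT₂α, hSα]
    omega
  have hnbr : ∀ z, G.Adj v z → z ∈ T₂ \ S.erase v := by
    intro z hz
    have hzT₁ : z ∉ T₁ := fun hzT₁ => hT₁ v hvT₁ z hzT₁ hz
    have hzS : z ∉ S := fun hzS => hS v hvS z hzS hz
    have hzT₂ : z ∈ T₂ := (mem_union.1 (hcover ▸ mem_univ z)).resolve_left hzT₁
    exact mem_sdiff.2 ⟨hzT₂, fun hz' => hzS (mem_of_mem_erase hz')⟩
  exact card_le_one.1 hrest x (hnbr x hx) y (hnbr y hy)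

end W2

/-- K₂ is the unique connected W₂ graph of order 2α(G). -/
theorem stmt13 {V : Type*} [Fintype V] (G : SimpleGraph V)
    (hconn : G.Connected) (h : W2 G) (hcard : Fintype.card V = 2 * alpha G) :
    Nonempty (G ≃g (⊤ : SimpleGraph (Fin 2))) :=
  SimpleGraph.nonempty_iso_top_fin_two_of_existsUnique_adj hconn fun v =>
    let ⟨w, hw⟩ := h.exists_adj v
    ⟨w, hw, fun _ hy => h.adj_unique hcard hy hw⟩
end
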